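/- Let λ > 0. Let A* be a generalized Mahalanobis operator on H and B* a generalized Mahalanobis operator on V satisfying ⟨A* x, y⟩ = ⟨B* x, y⟩ for all x, y ∈ V. Then for u ∈ V, the pair (A*, u) minimizes f(A, v) + λ‖v‖_A² over all pairs (A, v) with A a generalized Mahalanobis operator on H and v ∈ H if and only if (B*, u) minimizes f_V(B, v) + λ‖v‖_B² over all pairs (B, v) with B a generalized Mahalanobis operator on V and v ∈ V; moreover in this case the two optimal values are equal: f(A*, u) + λ‖u‖_{A*}² = f_V(B*, u) + λ‖u‖_{B*}². -/

import Mathlib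

open scoped RealInnerProductSpace

/-- A continuous linear operator on a real inner product space is a *generalized Mahalanobis
operator* if it is self-adjoint and positive definite. -/
def IsGenMahalanobis {H : Type*} [NormedAddCommGroup H] [InnerProductSpace ℝ H]
    (A : H →L[ℝ] H) : Prop :=
  (∀ x y : H, ⟪A x, y⟫ = ⟪x, A y⟫) ∧ ∀ x : H, x ≠ 0 → 0 < ⟪A x, x⟫

/-- A linear operator on a (subspace viewed as an) inner product space is a *generalized
Mahalanobis operator* if it is self-adjoint and positive definite. -/
def IsGenMahalanobisLin {V : Type*} [NormedAddCommGroup V] [InnerProductSpace ℝ V]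
    (B : V →ₗ[ℝ] V) : Prop :=
  (∀ x y : V, ⟪B x, y⟫ = ⟪x, B y⟫) ∧ ∀ x : V, x ≠ 0 → 0 < ⟪B x, x⟫

/-- The paired-comparison empirical objective
`f(A, u) = Σ_i ℓ (sgn (‖z^i_1 - u‖_A² - ‖z^i_2 - u‖_A²)) (y i)`,
where `‖x‖_A² = ⟪A x, x⟫`. -/
noncomputable def pairObj {H : Type*} [NormedAddCommGroup H] [InnerProductSpace ℝ H]
    {n : ℕ} (ℓ : ℝ → ℝ → ℝ) (z₁ z₂ : Fin n → H) (y : Fin n → ℝ)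
    (A : H → H) (u : H) : ℝ :=
  ∑ i, ℓ (Real.sign (⟪A (z₁ i - u), z₁ i - u⟫ - ⟪A (z₂ i - u), z₂ i - u⟫)) (y i)

/-!
An operator `B` on `V` extends to `H` by the identity on `Vᗮ` without changing its quadratic form
on `V`, so every value of the problem on `V` is a value of the problem on `H`. Conversely, given
`A` on `H` and `v ∈ H`, let `w ∈ V` be the `A`-orthogonal projection of `v` onto `V`; it exists
because the compression of `A` to `V` is positive definite, hence invertible on the
finite-dimensional `V`. As all `zⁱ` lie in `V`, passing from `v` to `w` lowers both
`‖zⁱ₁ - ·‖_A²` and `‖zⁱ₂ - ·‖_A²` by the same amount `‖v - w‖_A²`, so the signs are unchanged,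
while `‖w‖_A ≤ ‖v‖_A`; and the compression of `A` has the quadratic form of `A` on `V`.
-/

section

variable {H : Type*} [NormedAddCommGroup H] [InnerProductSpace ℝ H]

theorem LinearMap.IsSymmetric.inner_map_add_self {A : H →ₗ[ℝ] H} (hA : A.IsSymmetric) {a b : H}
    (hba : ⟪A b, a⟫ = 0) : ⟪A (a + b), a + b⟫ = ⟪A a, a⟫ + ⟪A b, b⟫ := by
  have hab : ⟪A a, b⟫ = 0 := by rw [hA, real_inner_comm, hba]
  simp only [map_add, inner_add_left, inner_add_right, hab, hba]
  ring

theorem LinearMap.IsSymmetric.inner_map_sub_self_eq_add {A : H →ₗ[ℝ] H} (hA : A.IsSymmetric)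
    {v w z : H} (h : ⟪A (v - w), z - w⟫ = 0) :
    ⟪A (z - v), z - v⟫ = ⟪A (z - w), z - w⟫ + ⟪A (v - w), v - w⟫ := by
  have h' : ⟪A (w - v), z - w⟫ = 0 := by rw [← neg_sub v w, map_neg, inner_neg_left, h, neg_zero]
  rw [← sub_add_sub_cancel z w v, hA.inner_map_add_self h', ← neg_sub v w, map_neg,
    inner_neg_left, inner_neg_right, neg_neg]

theorem IsGenMahalanobisLin.injective {V : Type*} [NormedAddCommGroup V] [InnerProductSpace ℝ V]
    {B : V →ₗ[ℝ] V} (hB : IsGenMahalanobisLin B) : Function.Injective B := by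
  refine (injective_iff_map_eq_zero B).mpr fun x hx => ?_
  by_contra hx0
  simpa [hx] using hB.2 x hx0

theorem IsGenMahalanobis.inner_map_self_nonneg {A : H →L[ℝ] H} (hA : IsGenMahalanobis A) (x : H) :
    0 ≤ ⟪A x, x⟫ := by
  rcases eq_or_ne x 0 with rfl | hx
  · rw [inner_zero_right]
  · exact (hA.2 x hx).le

noncomputable def regularizedPairObj {n : ℕ} (ℓ : ℝ → ℝ → ℝ) (z₁ z₂ : Fin n → H) (y : Fin n → ℝ)
    (lam : ℝ) (A : H → H) (u : H) : ℝ :=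
  pairObj ℓ z₁ z₂ y A u + lam * ⟪A u, u⟫

section Subspace

variable {V : Submodule ℝ H}

theorem pairObj_subtype {n : ℕ} (ℓ : ℝ → ℝ → ℝ) (ζ₁ ζ₂ : Fin n → V) (y : Fin n → ℝ)
    {A : H → H} {B : V → V} (hAB : ∀ x : V, ⟪A x, x⟫ = ⟪B x, x⟫) (u : V) :
    pairObj ℓ (fun i => (ζ₁ i : H)) (fun i => (ζ₂ i : H)) y A u = pairObj ℓ ζ₁ ζ₂ y B u := by
  unfold pairObj
  refine Finset.sum_congr rfl fun i _ => ?_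
  rw [← hAB, ← hAB]
  rfl

theorem regularizedPairObj_subtype {n : ℕ} (ℓ : ℝ → ℝ → ℝ) (ζ₁ ζ₂ : Fin n → V) (y : Fin n → ℝ)
    (lam : ℝ) {A : H → H} {B : V → V} (hAB : ∀ x : V, ⟪A x, x⟫ = ⟪B x, x⟫) (u : V) :
    regularizedPairObj ℓ (fun i => (ζ₁ i : H)) (fun i => (ζ₂ i : H)) y lam A u =
      regularizedPairObj ℓ ζ₁ ζ₂ y lam B u := by
  rw [regularizedPairObj, regularizedPairObj, pairObj_subtype ℓ ζ₁ ζ₂ y hAB, hAB]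

end Subspace

theorem pairObj_eq_of_inner_map_sub_eq_zero {n : ℕ} (ℓ : ℝ → ℝ → ℝ) {V : Submodule ℝ H}
    {z₁ z₂ : Fin n → H} (hz₁ : ∀ i, z₁ i ∈ V) (hz₂ : ∀ i, z₂ i ∈ V) (y : Fin n → ℝ)
    {A : H →ₗ[ℝ] H} (hA : A.IsSymmetric) {v w : H} (hwV : w ∈ V)
    (hw : ∀ x ∈ V, ⟪A (v - w), x⟫ = 0) :
    pairObj ℓ z₁ z₂ y A v = pairObj ℓ z₁ z₂ y A w := by
  unfold pairObj
  refine Finset.sum_congr rfl fun i _ => ?_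
  rw [hA.inner_map_sub_self_eq_add (hw _ (V.sub_mem (hz₁ i) hwV)),
    hA.inner_map_sub_self_eq_add (hw _ (V.sub_mem (hz₂ i) hwV)), add_sub_add_right_eq_sub]

section Compression

variable (V : Submodule ℝ H) [V.HasOrthogonalProjection]

noncomputable def compression (A : H →L[ℝ] H) : V →ₗ[ℝ] V :=
  V.orthogonalProjectionOnto ∘L A ∘L V.subtypeL

theorem inner_compression_apply (A : H →L[ℝ] H) (x x' : V) :
    ⟪compression V A x, x'⟫ = ⟪A x, (x' : H)⟫ :=
  Submodule.inner_orthogonalProjectionOnto_eq_of_mem_right x' (A x)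

theorem IsGenMahalanobis.compression {A : H →L[ℝ] H} (hA : IsGenMahalanobis A) :
    IsGenMahalanobisLin (compression V A) := by
  refine ⟨fun x x' => ?_, fun x hx => ?_⟩
  · rw [inner_compression_apply, real_inner_comm _ x, inner_compression_apply, hA.1,
      real_inner_comm]
  · rw [inner_compression_apply]
    exact hA.2 x (by exact_mod_cast hx)

end Compression

section FiniteDimensional

variable (V : Submodule ℝ H) [FiniteDimensional ℝ V]

theorem IsGenMahalanobis.exists_inner_map_sub_eq_zero {A : H →L[ℝ] H}
    (hA : IsGenMahalanobis A) (v : H) : ∃ w : V, ∀ x ∈ V, ⟪A (v - w), x⟫ = 0 := by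
  obtain ⟨w, hw⟩ := LinearMap.injective_iff_surjective.mp (hA.compression V).injective
    (V.orthogonalProjectionOnto (A v))
  refine ⟨w, fun x hx => ?_⟩
  have hAw : ⟪A w, x⟫ = ⟪A v, x⟫ := by
    rw [← inner_compression_apply V A w ⟨x, hx⟩, hw,
      Submodule.inner_orthogonalProjectionOnto_eq_of_mem_right]
  rw [map_sub, inner_sub_left, hAw, sub_self]

noncomputable def extendById (B : V →ₗ[ℝ] V) : H →L[ℝ] H :=
  V.subtypeL ∘L LinearMap.toContinuousLinearMap B ∘L V.orthogonalProjectionOnto +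
    Vᗮ.starProjection

theorem extendById_apply (B : V →ₗ[ℝ] V) (x : H) :
    extendById V B x = B (V.orthogonalProjectionOnto x) + Vᗮ.starProjection x :=
  rfl

theorem extendById_apply_coe (B : V →ₗ[ℝ] V) (x : V) : extendById V B x = B x := by
  rw [extendById_apply, Submodule.orthogonalProjectionOnto_mem_subspace_eq_self,
    Submodule.starProjection_orthogonal_apply_eq_zero x.2, add_zero]

theorem inner_extendById_apply (B : V →ₗ[ℝ] V) (x y : H) :
    ⟪extendById V B x, y⟫ =
      ⟪B (V.orthogonalProjectionOnto x), V.orthogonalProjectionOnto y⟫ +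
        ⟪Vᗮ.starProjection x, y⟫ := by
  rw [extendById_apply, inner_add_left, Submodule.inner_orthogonalProjectionOnto_eq_of_mem_left]

theorem IsGenMahalanobisLin.extendById {B : V →ₗ[ℝ] V} (hB : IsGenMahalanobisLin B) :
    IsGenMahalanobis (extendById V B) := by
  refine ⟨fun x y => ?_, fun x hx => ?_⟩
  · rw [inner_extendById_apply, real_inner_comm _ x, inner_extendById_apply, hB.1,
      real_inner_comm _ (V.orthogonalProjectionOnto x),
      Submodule.inner_starProjection_left_eq_right, real_inner_comm x]
  · have hQ : 0 ≤ ⟪Vᗮ.starProjection x, x⟫ := by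
      rw [Submodule.starProjection_apply,
        ← Submodule.inner_orthogonalProjectionOnto_eq_of_mem_left]
      exact real_inner_self_nonneg
    rw [inner_extendById_apply]
    by_cases hP : V.orthogonalProjectionOnto x = 0
    · rw [hP, map_zero, inner_zero_left, zero_add, Submodule.starProjection_eq_self_iff.mpr
        (Submodule.orthogonalProjectionOnto_eq_zero_iff.mp hP)]
      exact real_inner_self_pos.mpr hx
    · exact add_pos_of_pos_of_nonneg (hB.2 _ hP) hQ

theorem exists_regularizedPairObj_compression_le {n : ℕ} (ℓ : ℝ → ℝ → ℝ) (ζ₁ ζ₂ : Fin n → V)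
    (y : Fin n → ℝ) {lam : ℝ} (hlam : 0 ≤ lam) {A : H →L[ℝ] H} (hA : IsGenMahalanobis A)
    (v : H) : ∃ w : V, regularizedPairObj ℓ ζ₁ ζ₂ y lam (compression V A) w ≤
      regularizedPairObj ℓ (fun i => (ζ₁ i : H)) (fun i => (ζ₂ i : H)) y lam A v := by
  obtain ⟨w, hw⟩ := hA.exists_inner_map_sub_eq_zero V v
  have hAsymm : (A : H →ₗ[ℝ] H).IsSymmetric := hA.1
  have hvw : ⟪A w, w⟫ ≤ ⟪A v, v⟫ := by
    have hsplit := hAsymm.inner_map_add_self (hw w w.2)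
    rw [add_sub_cancel] at hsplit
    exact hsplit ▸ le_add_of_nonneg_right (hA.inner_map_self_nonneg _)
  refine ⟨w, ?_⟩
  calc regularizedPairObj ℓ ζ₁ ζ₂ y lam (compression V A) w
      = pairObj ℓ (fun i => (ζ₁ i : H)) (fun i => (ζ₂ i : H)) y A w + lam * ⟪A w, w⟫ :=
        (regularizedPairObj_subtype ℓ ζ₁ ζ₂ y lam
          (fun x => (inner_compression_apply V A x x).symm) w).symm
    _ = pairObj ℓ (fun i => (ζ₁ i : H)) (fun i => (ζ₂ i : H)) y A v + lam * ⟪A w, w⟫ :=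
        congrArg (· + lam * ⟪A w, w⟫) (pairObj_eq_of_inner_map_sub_eq_zero ℓ (fun i => (ζ₁ i).2)
          (fun i => (ζ₂ i).2) y hAsymm w.2 hw).symm
    _ ≤ regularizedPairObj ℓ (fun i => (ζ₁ i : H)) (fun i => (ζ₂ i : H)) y lam A v := by
        unfold regularizedPairObj
        gcongr

end FiniteDimensional

end

theorem representer_theorem_metric_preference_general
    {H : Type*} [NormedAddCommGroup H] [InnerProductSpace ℝ H]
    (V : Submodule ℝ H) [FiniteDimensional ℝ V]
    {n : ℕ} (ℓ : ℝ → ℝ → ℝ) (z₁ z₂ : Fin n → H) (y : Fin n → ℝ)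
    (hz₁ : ∀ i, z₁ i ∈ V) (hz₂ : ∀ i, z₂ i ∈ V)
    (lam : ℝ) (hlam : 0 < lam)
    (Astar : H →L[ℝ] H)
    (Bstar : V →ₗ[ℝ] V)
    (hagree : ∀ x y' : V, ⟪Astar (x : H), (y' : H)⟫ = ⟪Bstar x, y'⟫)
    (u : V) :
    ((∀ (A : H →L[ℝ] H), IsGenMahalanobis A → ∀ v : H,
        pairObj ℓ z₁ z₂ y ⇑Astar (u : H) + lam * ⟪Astar (u : H), (u : H)⟫ ≤
          pairObj ℓ z₁ z₂ y ⇑A v + lam * ⟪A v, v⟫) ↔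
      (∀ (B : V →ₗ[ℝ] V), IsGenMahalanobisLin B → ∀ v : V,
        pairObj ℓ (fun i => (⟨z₁ i, hz₁ i⟩ : V)) (fun i => (⟨z₂ i, hz₂ i⟩ : V)) y ⇑Bstar u +
            lam * ⟪Bstar u, u⟫ ≤
          pairObj ℓ (fun i => (⟨z₁ i, hz₁ i⟩ : V)) (fun i => (⟨z₂ i, hz₂ i⟩ : V)) y ⇑B v +
            lam * ⟪B v, v⟫)) ∧
    ((∀ (A : H →L[ℝ] H), IsGenMahalanobis A → ∀ v : H,
        pairObj ℓ z₁ z₂ y ⇑Astar (u : H) + lam * ⟪Astar (u : H), (u : H)⟫ ≤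
          pairObj ℓ z₁ z₂ y ⇑A v + lam * ⟪A v, v⟫) →
      pairObj ℓ z₁ z₂ y ⇑Astar (u : H) + lam * ⟪Astar (u : H), (u : H)⟫ =
        pairObj ℓ (fun i => (⟨z₁ i, hz₁ i⟩ : V)) (fun i => (⟨z₂ i, hz₂ i⟩ : V)) y ⇑Bstar u +
          lam * ⟪Bstar u, u⟫) := by
  set ζ₁ : Fin n → V := fun i => ⟨z₁ i, hz₁ i⟩
  set ζ₂ : Fin n → V := fun i => ⟨z₂ i, hz₂ i⟩
  have hstar :
      regularizedPairObj ℓ z₁ z₂ y lam Astar u = regularizedPairObj ℓ ζ₁ ζ₂ y lam Bstar u :=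
    regularizedPairObj_subtype ℓ ζ₁ ζ₂ y lam (fun x => hagree x x) u
  refine ⟨⟨fun hmin B hB v => ?_, fun hmin A hA v => ?_⟩, fun _ => hstar⟩
  · calc regularizedPairObj ℓ ζ₁ ζ₂ y lam Bstar u
        = regularizedPairObj ℓ z₁ z₂ y lam Astar u := hstar.symm
      _ ≤ regularizedPairObj ℓ z₁ z₂ y lam (extendById V B) v := hmin _ (hB.extendById V) v
      _ = regularizedPairObj ℓ ζ₁ ζ₂ y lam B v :=
        regularizedPairObj_subtype ℓ ζ₁ ζ₂ y lam (fun x => by rw [extendById_apply_coe]; rfl) v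
  · obtain ⟨w, hw⟩ := exists_regularizedPairObj_compression_le V ℓ ζ₁ ζ₂ y hlam.le hA v
    calc regularizedPairObj ℓ z₁ z₂ y lam Astar u
        = regularizedPairObj ℓ ζ₁ ζ₂ y lam Bstar u := hstar
      _ ≤ regularizedPairObj ℓ ζ₁ ζ₂ y lam (compression V A) w := hmin _ (hA.compression V) w
      _ ≤ regularizedPairObj ℓ z₁ z₂ y lam A v := hw

/-- Representer theorem for simultaneous metric and preference learning.
Let `λ > 0`, and let `A*` (on `H`) and `B*` (on `V`) be generalized Mahalanobis operators
agreeing on `V`. Then for `u ∈ V`, `(A*, u)` minimizes the regularized objective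
`f(A, v) + λ‖v‖_A²` over `H` iff `(B*, u)` minimizes `f_V(B, v) + λ‖v‖_B²` over `V`,
and in this case the two optimal values are equal. -/
theorem representer_theorem_metric_preference
    {H : Type*} [NormedAddCommGroup H] [InnerProductSpace ℝ H] [CompleteSpace H]
    (V : Submodule ℝ H) [FiniteDimensional ℝ V]
    {n : ℕ} (ℓ : ℝ → ℝ → ℝ) (z₁ z₂ : Fin n → H) (y : Fin n → ℝ)
    (hz₁ : ∀ i, z₁ i ∈ V) (hz₂ : ∀ i, z₂ i ∈ V)
    (hy : ∀ i, y i = 1 ∨ y i = -1)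
    (lam : ℝ) (hlam : 0 < lam)
    (Astar : H →L[ℝ] H) (hAstar : IsGenMahalanobis Astar)
    (Bstar : V →ₗ[ℝ] V) (hBstar : IsGenMahalanobisLin Bstar)
    (hagree : ∀ x y' : V, ⟪Astar (x : H), (y' : H)⟫ = ⟪Bstar x, y'⟫)
    (u : V) :
    ((∀ (A : H →L[ℝ] H), IsGenMahalanobis A → ∀ v : H,
        pairObj ℓ z₁ z₂ y ⇑Astar (u : H) + lam * ⟪Astar (u : H), (u : H)⟫ ≤
          pairObj ℓ z₁ z₂ y ⇑A v + lam * ⟪A v, v⟫) ↔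
      (∀ (B : V →ₗ[ℝ] V), IsGenMahalanobisLin B → ∀ v : V,
        pairObj ℓ (fun i => (⟨z₁ i, hz₁ i⟩ : V)) (fun i => (⟨z₂ i, hz₂ i⟩ : V)) y ⇑Bstar u +
            lam * ⟪Bstar u, u⟫ ≤
          pairObj ℓ (fun i => (⟨z₁ i, hz₁ i⟩ : V)) (fun i => (⟨z₂ i, hz₂ i⟩ : V)) y ⇑B v +
            lam * ⟪B v, v⟫)) ∧
    ((∀ (A : H →L[ℝ] H), IsGenMahalanobis A → ∀ v : H,
        pairObj ℓ z₁ z₂ y ⇑Astar (u : H) + lam * ⟪Astar (u : H), (u : H)⟫ ≤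
          pairObj ℓ z₁ z₂ y ⇑A v + lam * ⟪A v, v⟫) →
      pairObj ℓ z₁ z₂ y ⇑Astar (u : H) + lam * ⟪Astar (u : H), (u : H)⟫ =
        pairObj ℓ (fun i => (⟨z₁ i, hz₁ i⟩ : V)) (fun i => (⟨z₂ i, hz₂ i⟩ : V)) y ⇑Bstar u +
          lam * ⟪Bstar u, u⟫) :=
  representer_theorem_metric_preference_general V ℓ z₁ z₂ y hz₁ hz₂ lam hlam Astar Bstar hagree u
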